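/- arXiv:1010.4517 — 3 statements merged into one kernel-verified Lean document; each statement's English description precedes it below -/
import Mathlib

section
/- For every n ≥ 1 and every vector x ∈ ℝⁿ, letting μ = (1/n)∑_{j=1}^n x_j denote its mean, one has ∑_{i=1}^n (x_i − μ)·tanh(x_i) ≥ 0. Equivalently, with P = I − (1/n)𝟙𝟙ᵀ the orthogonal projection onto the zero-mean subspace of ℝⁿ and tanh applied elementwise, ⟨Px, tanh(x)⟩ ≥ 0. -/
/-!
Since `∑ᵢ (xᵢ - μ) = 0`, the sum equals `∑ᵢ (xᵢ - μ) (tanh xᵢ - tanh μ)`, and every term of the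
latter is nonnegative because `tanh` is monotone.
-/

open Finset

theorem Real.tanh_strictMono : StrictMono Real.tanh := by
  intro a b hab
  by_contra! hba
  have := Real.artanh_le_artanh (Real.neg_one_lt_tanh b) (Real.tanh_lt_one a) hba
  rw [Real.artanh_tanh, Real.artanh_tanh] at this
  linarith

theorem Finset.sum_sub_mean_eq_zero {ι : Type*} [Fintype ι] (x : ι → ℝ) :
    ∑ i, (x i - (∑ j, x j) / Fintype.card ι) = 0 := by
  rcases isEmpty_or_nonempty ι with hι | hι
  · simp
  rw [sum_sub_distrib, sum_const, card_univ, nsmul_eq_mul,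
    mul_div_cancel₀ _ (Nat.cast_ne_zero.2 Fintype.card_ne_zero), sub_self]

theorem Monotone.sum_sub_mean_mul_nonneg {ι : Type*} [Fintype ι] {f : ℝ → ℝ} (hf : Monotone f)
    (x : ι → ℝ) : 0 ≤ ∑ i, (x i - (∑ j, x j) / Fintype.card ι) * f (x i) := by
  set μ := (∑ j, x j) / Fintype.card ι
  have hterm (i : ι) : 0 ≤ (x i - μ) * (f (x i) - f μ) := by
    rw [mul_comm]
    exact (monovary_id_iff.2 hf).sub_mul_sub_nonneg μ (x i)
  calc 0 ≤ ∑ i, (x i - μ) * (f (x i) - f μ) := sum_nonneg fun i _ ↦ hterm i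
    _ = ∑ i, (x i - μ) * f (x i) - (∑ i, (x i - μ)) * f μ := by
      rw [sum_mul, ← sum_sub_distrib]
      simp only [mul_sub]
    _ = ∑ i, (x i - μ) * f (x i) := by
      rw [sum_sub_mean_eq_zero, zero_mul, sub_zero]

theorem fluctuation_tanh_inner_nonneg_general (n : ℕ) (x : Fin n → ℝ) :
    0 ≤ ∑ i, (x i - (∑ j, x j) / n) * Real.tanh (x i) := by
  simpa using Real.tanh_strictMono.monotone.sum_sub_mean_mul_nonneg x

/-- **Lemma 1 of the paper, lower bound.** For every `n ≥ 1` and `x ∈ ℝⁿ`, with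
`μ = (1/n) ∑ⱼ xⱼ` the mean of the entries, `⟨Px, tanh x⟩ = ∑ᵢ (xᵢ - μ)·tanh(xᵢ) ≥ 0`,
where `P = I - (1/n)𝟙𝟙ᵀ` is the projection onto the zero-mean subspace and `tanh`
is applied elementwise. -/
theorem fluctuation_tanh_inner_nonneg (n : ℕ) (hn : 1 ≤ n) (x : Fin n → ℝ) :
    0 ≤ ∑ i, (x i - (∑ j, x j) / n) * Real.tanh (x i) :=
  fluctuation_tanh_inner_nonneg_general n x
end

section
/- For every n ≥ 1 and every vector x ∈ ℝⁿ, letting μ = (1/n)∑_{j=1}^n x_j denote its mean, one has ∑_{i=1}^n (x_i − μ)·tanh(x_i) ≤ ∑_{i=1}^n (x_i − μ)². Equivalently, with P = I − (1/n)𝟙𝟙ᵀ the orthogonal projection onto the zero-mean subspace of ℝⁿ and tanh applied elementwise, ⟨Px, tanh(x)⟩ ≤ ‖Px‖². -/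
/-!
Subtracting `tanh μ` from every `tanh xᵢ` does not change the left-hand side, because the
fluctuations `xᵢ - μ` sum to zero. The sum then becomes `∑ (xᵢ - μ)(tanh xᵢ - tanh μ)`, and each
term is at most `(xᵢ - μ)²` since `tanh` is `1`-Lipschitz (its derivative `1 / cosh²` lies in
`(0, 1]`).
-/

open Finset NNReal

namespace Real

theorem hasDerivAt_tanh (x : ℝ) : HasDerivAt tanh (1 / cosh x ^ 2) x := by
  have hquot := (hasDerivAt_sinh x).div (hasDerivAt_cosh x) (cosh_pos x).ne'
  rw [← sq, ← sq, cosh_sq_sub_sinh_sq] at hquot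
  rwa [show tanh = sinh / cosh from funext tanh_eq_sinh_div_cosh]

theorem lipschitzWith_one_tanh : LipschitzWith 1 tanh := by
  refine lipschitzWith_of_nnnorm_deriv_le (fun x => (hasDerivAt_tanh x).differentiableAt)
    fun x => ?_
  have hcosh : 1 ≤ cosh x ^ 2 := one_le_pow₀ (one_le_cosh x)
  rw [← NNReal.coe_le_coe, coe_nnnorm, (hasDerivAt_tanh x).deriv, norm_of_nonneg (by positivity)]
  simpa using inv_le_one_of_one_le₀ hcosh

end Real

theorem LipschitzWith.sub_mul_sub_le {f : ℝ → ℝ} {K : ℝ≥0} (hf : LipschitzWith K f) (a b : ℝ) :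
    (a - b) * (f a - f b) ≤ K * (a - b) ^ 2 := by
  have hdist := hf.dist_le_mul a b
  rw [Real.dist_eq, Real.dist_eq] at hdist
  calc (a - b) * (f a - f b) ≤ |a - b| * |f a - f b| := abs_mul (a - b) _ ▸ le_abs_self _
    _ ≤ |a - b| * (K * |a - b|) := mul_le_mul_of_nonneg_left hdist (abs_nonneg _)
    _ = K * (a - b) ^ 2 := by rw [mul_left_comm, abs_mul_abs_self, sq]

namespace Finset

variable {ι : Type*} (s : Finset ι) (x : ι → ℝ)

theorem sum_sub_mean_eq_zero_s1 : ∑ i ∈ s, (x i - (∑ j ∈ s, x j) / #s) = 0 := by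
  rcases s.eq_empty_or_nonempty with rfl | hs
  · simp
  · rw [sum_sub_distrib, sum_const, nsmul_eq_mul, mul_div_cancel₀ _ (by simpa using hs.ne_empty),
      sub_self]

theorem sum_sub_mean_mul_le_of_lipschitzWith {f : ℝ → ℝ} {K : ℝ≥0} (hf : LipschitzWith K f) :
    ∑ i ∈ s, (x i - (∑ j ∈ s, x j) / #s) * f (x i) ≤
      K * ∑ i ∈ s, (x i - (∑ j ∈ s, x j) / #s) ^ 2 := by
  set μ := (∑ j ∈ s, x j) / #s
  have hcentred : ∑ i ∈ s, (x i - μ) * f (x i) = ∑ i ∈ s, (x i - μ) * (f (x i) - f μ) := by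
    simp_rw [mul_sub _ (f _), sum_sub_distrib, ← sum_mul, μ, sum_sub_mean_eq_zero_s1, zero_mul,
      sub_zero]
  rw [hcentred, mul_sum]
  exact sum_le_sum fun i _ => hf.sub_mul_sub_le (x i) μ

end Finset

theorem fluctuation_tanh_inner_le_general (n : ℕ) (x : Fin n → ℝ) :
    ∑ i, (x i - (∑ j, x j) / n) * Real.tanh (x i) ≤
      ∑ i, (x i - (∑ j, x j) / n) ^ 2 := by
  simpa using univ.sum_sub_mean_mul_le_of_lipschitzWith x Real.lipschitzWith_one_tanh

/-- **Lemma 1 of the paper, upper bound.** For every `n ≥ 1` and `x ∈ ℝⁿ`, with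
`μ = (1/n) ∑ⱼ xⱼ` the mean of the entries, `⟨Px, tanh x⟩ = ∑ᵢ (xᵢ - μ)·tanh(xᵢ)`
is at most `‖Px‖² = ∑ᵢ (xᵢ - μ)²`. -/
theorem fluctuation_tanh_inner_le (n : ℕ) (hn : 1 ≤ n) (x : Fin n → ℝ) :
    ∑ i, (x i - (∑ j, x j) / n) * Real.tanh (x i) ≤
      ∑ i, (x i - (∑ j, x j) / n) ^ 2 :=
  fluctuation_tanh_inner_le_general n x
end

section
/- Let n ≥ 1, let c ≥ 0 and λ₋ > 0 be real constants, let L ∈ ℝ^{n×n} be symmetric with L·𝟙 = 0 and satisfying ⟨v, Lv⟩ ≥ λ₋‖v‖² for all v ∈ ℝⁿ with 𝟙ᵀv = 0, and let P = I − (1/n)𝟙𝟙ᵀ. If X : ℝ → ℝⁿ is differentiable and satisfies X′(t) = −(c·tanh(X(t)) + L·X(t)) for all t ≥ 0 (tanh applied elementwise), then for all t ≥ 0 one has ‖P·X(t)‖² ≤ e^{−2λ₋t}·‖P·X(0)‖². That is, in the noise-free system the fluctuations about the center of mass decay exponentially at rate 2λ₋. -/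
open Real
open scoped Matrix

/-! `V(t) = ‖P X(t)‖²` obeys `V' = 2⟨P X, X'⟩ = -2c⟨P X, tanh X⟩ - 2⟨P X, L (P X)⟩ ≤ -2λ₋ V`:
`L` annihilates constants, the spectral gap bounds the second term, and the first is
nonnegative because, with `m` the mean of `x`, `⟨P x, tanh x⟩ = ∑ᵢ (xᵢ - m)(tanh xᵢ - tanh m)`
and `tanh` is monotone. Grönwall's argument, applied to `e^{2λ₋t} V(t)`, finishes the proof. -/

theorem Real.tanh_monotone : Monotone tanh := fun a b hab => by
  rw [tanh_eq_sinh_div_cosh, tanh_eq_sinh_div_cosh, div_le_div_iff₀ (cosh_pos a) (cosh_pos b)]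
  have h : 0 ≤ sinh (b - a) := sinh_nonneg_iff.2 (sub_nonneg.2 hab)
  rw [sinh_sub] at h
  linarith

theorem le_exp_mul_mul_of_hasDerivAt_le_mul {f f' : ℝ → ℝ} {K : ℝ}
    (hf : ∀ t, 0 ≤ t → HasDerivAt f (f' t) t) (hle : ∀ t, 0 ≤ t → f' t ≤ K * f t)
    {t : ℝ} (ht : 0 ≤ t) : f t ≤ exp (K * t) * f 0 := by
  have hg : ∀ s, 0 ≤ s → HasDerivAt (fun s => exp (-(K * s)) * f s)
      (exp (-(K * s)) * (f' s - K * f s)) s := fun s hs =>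
    (((hasDerivAt_id' s).const_mul K).fun_neg.exp.fun_mul (hf s hs)).congr_deriv (by ring)
  have hanti : AntitoneOn (fun s => exp (-(K * s)) * f s) (Set.Ici 0) := by
    refine antitoneOn_of_hasDerivWithinAt_nonpos (convex_Ici 0)
      (fun s hs => (hg s hs).continuousAt.continuousWithinAt)
      (fun s hs => (hg s (interior_subset hs)).hasDerivWithinAt) fun s hs => ?_
    exact mul_nonpos_of_nonneg_of_nonpos (exp_pos _).le
      (sub_nonpos.2 (hle s (interior_subset hs)))
  have hle_zero := hanti Set.self_mem_Ici ht ht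
  simp only [mul_zero, neg_zero, exp_zero, one_mul] at hle_zero
  calc f t = exp (K * t) * (exp (-(K * t)) * f t) := by
        rw [← mul_assoc, ← exp_add, add_neg_cancel, exp_zero, one_mul]
    _ ≤ exp (K * t) * f 0 := by gcongr

section Centered

variable {ι : Type*} [Fintype ι]

/-- The paper's `P x`. -/
noncomputable def centered (x : ι → ℝ) (i : ι) : ℝ := x i - (∑ j, x j) / Fintype.card ι

theorem sum_centered (x : ι → ℝ) : ∑ i, centered x i = 0 := by
  rcases isEmpty_or_nonempty ι with _ | _
  · simp
  · simp [centered, Finset.sum_sub_distrib, mul_div_cancel₀]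

theorem sum_mul_centered_of_sum_eq_zero {y : ι → ℝ} (hy : ∑ i, y i = 0) (x : ι → ℝ) :
    ∑ i, y i * centered x i = ∑ i, y i * x i := by
  simp [centered, mul_sub, Finset.sum_sub_distrib, ← Finset.sum_mul, hy]

theorem Matrix.mulVec_centered {L : Matrix ι ι ℝ} (hL : L *ᵥ (fun _ => 1) = 0) (x : ι → ℝ) :
    L *ᵥ centered x = L *ᵥ x := by
  have : centered x = x - ((∑ j, x j) / Fintype.card ι) • fun _ => 1 := by
    ext i; simp [centered]
  rw [this, Matrix.mulVec_sub, Matrix.mulVec_smul, hL, smul_zero, sub_zero]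

theorem sum_centered_mul_nonneg_of_monotone {f : ℝ → ℝ} (hf : Monotone f) (x : ι → ℝ) :
    0 ≤ ∑ i, centered x i * f (x i) := by
  set m := (∑ j, x j) / Fintype.card ι
  calc 0 ≤ ∑ i, (x i - m) * (f (x i) - f m) := Finset.sum_nonneg fun i _ => by
        rcases le_total m (x i) with h | h
        · exact mul_nonneg (sub_nonneg.2 h) (sub_nonneg.2 (hf h))
        · exact mul_nonneg_of_nonpos_of_nonpos (sub_nonpos.2 h) (sub_nonpos.2 (hf h))
    _ = ∑ i, centered x i * f (x i) - (∑ i, centered x i) * f m := by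
        simp only [mul_sub, Finset.sum_sub_distrib, Finset.sum_mul]; rfl
    _ = ∑ i, centered x i * f (x i) := by rw [sum_centered, zero_mul, sub_zero]

theorem HasDerivAt.sum_centered_sq {X : ℝ → ι → ℝ} {X' : ι → ℝ} {t : ℝ}
    (h : HasDerivAt X X' t) :
    HasDerivAt (fun s => ∑ i, centered (X s) i ^ 2) (2 * ∑ i, centered (X t) i * X' i) t := by
  have hcoord : ∀ i, HasDerivAt (fun s => centered (X s) i) (centered X' i) t := fun i =>
    (hasDerivAt_pi.1 h i).sub ((HasDerivAt.fun_sum fun j _ => hasDerivAt_pi.1 h j).div_const _)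
  refine (HasDerivAt.fun_sum fun i _ => (hcoord i).fun_pow 2).congr_deriv ?_
  rw [← sum_mul_centered_of_sum_eq_zero (sum_centered (X t)), Finset.mul_sum]
  simp only [Nat.cast_ofNat]
  exact Finset.sum_congr rfl fun i _ => by ring

theorem sum_centered_mul_drift_le {c lam : ℝ} (hc : 0 ≤ c) {L : Matrix ι ι ℝ}
    (hL1 : L *ᵥ (fun _ => 1) = 0)
    (hgap : ∀ v : ι → ℝ, ∑ i, v i = 0 → lam * ∑ i, v i ^ 2 ≤ ∑ i, v i * (L *ᵥ v) i)
    (x : ι → ℝ) :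
    ∑ i, centered x i * (-(c • (fun i => tanh (x i)) + L *ᵥ x)) i ≤
      -(lam * ∑ i, centered x i ^ 2) := by
  have htanh := sum_centered_mul_nonneg_of_monotone tanh_monotone x
  have hcoercive := hgap (centered x) (sum_centered x)
  rw [Matrix.mulVec_centered hL1] at hcoercive
  have hsplit : ∑ i, centered x i * (-(c • (fun i => tanh (x i)) + L *ᵥ x)) i =
      -(c * ∑ i, centered x i * tanh (x i)) - ∑ i, centered x i * (L *ᵥ x) i := by
    simp only [Pi.neg_apply, Pi.add_apply, Pi.smul_apply, smul_eq_mul, Finset.mul_sum,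
      ← Finset.sum_neg_distrib, ← Finset.sum_sub_distrib]
    exact Finset.sum_congr rfl fun i _ => by ring
  rw [hsplit]
  linarith [mul_nonneg hc htanh]

end Centered

theorem noise_free_fluctuations_decay_general (n : ℕ) (c : ℝ) (hc : 0 ≤ c)
    (lamMinus : ℝ)
    (L : Matrix (Fin n) (Fin n) ℝ)
    (hL1 : L.mulVec (fun _ => 1) = 0)
    (hgap : ∀ v : Fin n → ℝ, (∑ i, v i) = 0 →
      lamMinus * (∑ i, (v i) ^ 2) ≤ ∑ i, v i * L.mulVec v i)
    (X : ℝ → Fin n → ℝ)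
    (hX : ∀ t : ℝ, 0 ≤ t →
      HasDerivAt X (-(c • (fun i => Real.tanh (X t i)) + L.mulVec (X t))) t) :
    ∀ t : ℝ, 0 ≤ t →
      ∑ i, (X t i - (∑ j, X t j) / n) ^ 2 ≤
        Real.exp (-(2 * lamMinus * t)) * ∑ i, (X 0 i - (∑ j, X 0 j) / n) ^ 2 := by
  intro t ht
  have hdecay := le_exp_mul_mul_of_hasDerivAt_le_mul (K := -(2 * lamMinus))
    (fun s hs => (hX s hs).sum_centered_sq)
    (fun s _ => by linarith [sum_centered_mul_drift_le hc hL1 hgap (X s)]) ht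
  simpa only [centered, Fintype.card_fin, neg_mul] using hdecay

/-- **Exponential synchronization of the noise-free system at rate `2λ₋`.** Let
`c ≥ 0`, `λ₋ > 0`, and let `L` be symmetric with `L𝟙 = 0` and
`⟨v, Lv⟩ ≥ λ₋‖v‖²` for every zero-mean `v` (for a connected graph Laplacian, `λ₋`
is the Fiedler eigenvalue). If `X : ℝ → ℝⁿ` is differentiable and solves
`X′(t) = -(c·tanh(X(t)) + L·X(t))` for all `t ≥ 0` (tanh elementwise), then the
fluctuations about the center of mass satisfy
`‖P·X(t)‖² ≤ e^{-2λ₋t}·‖P·X(0)‖²` for all `t ≥ 0`, where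
`(P·X)ᵢ = Xᵢ - (1/n)∑ⱼ Xⱼ`. -/
theorem noise_free_fluctuations_decay (n : ℕ) (hn : 1 ≤ n) (c : ℝ) (hc : 0 ≤ c)
    (lamMinus : ℝ) (hlam : 0 < lamMinus)
    (L : Matrix (Fin n) (Fin n) ℝ) (hsym : L.IsSymm)
    (hL1 : L.mulVec (fun _ => 1) = 0)
    (hgap : ∀ v : Fin n → ℝ, (∑ i, v i) = 0 →
      lamMinus * (∑ i, (v i) ^ 2) ≤ ∑ i, v i * L.mulVec v i)
    (X : ℝ → Fin n → ℝ)
    (hX : ∀ t : ℝ, 0 ≤ t →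
      HasDerivAt X (-(c • (fun i => Real.tanh (X t i)) + L.mulVec (X t))) t) :
    ∀ t : ℝ, 0 ≤ t →
      ∑ i, (X t i - (∑ j, X t j) / n) ^ 2 ≤
        Real.exp (-(2 * lamMinus * t)) * ∑ i, (X 0 i - (∑ j, X 0 j) / n) ^ 2 :=
  noise_free_fluctuations_decay_general n c hc lamMinus L hL1 hgap X hX
end
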